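/- arXiv:math/0411170 — 4 statements merged into one kernel-verified Lean document; each statement's English description precedes it below -/
import Mathlib

section
/- Let (R, 𝔪) be a regular local ring of prime characteristic p > 0, and let 𝔞 ⊆ 𝔪 and J ⊆ 𝔪 be nonzero ideals with 𝔞 contained in the radical of J. If 𝔞 ⊆ J^s for a positive integer s and J can be generated by m elements, then c^J(𝔞) ≤ m/s. -/
open Filter Topology IsLocalRing

/-- A Noetherian local ring is *regular* if its maximal ideal can be generated by
`dim R` elements. -/
def IsRegularLocalRing' (R : Type*) [CommRing R] [IsLocalRing R] : Prop :=
  IsNoetherianRing R ∧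
    ∃ s : Finset R, Ideal.span (s : Set R) = IsLocalRing.maximalIdeal R ∧
      (s.card : WithBot (WithTop ℕ)) = ringKrullDim R

/-- The Frobenius power `I^{[q]}`: the ideal generated by the `q`-th powers of the
elements of `I`. -/
def Ideal.frobPow {R : Type*} [CommRing R] (I : Ideal R) (q : ℕ) : Ideal R :=
  Ideal.span ((fun x => x ^ q) '' (I : Set R))

/-- `ν_𝔞^J(q) = max { r : 𝔞^r ⊄ J^{[q]} }`. -/
noncomputable def fnu {R : Type*} [CommRing R] (a J : Ideal R) (q : ℕ) : ℕ :=
  sSup {r : ℕ | ¬ a ^ r ≤ J.frobPow q}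

/-- `ν_f^J(q) = max { r : f^r ∉ J^{[q]} }`. -/
noncomputable def fnuE {R : Type*} [CommRing R] (f : R) (J : Ideal R) (q : ℕ) : ℕ :=
  sSup {r : ℕ | f ^ r ∉ J.frobPow q}

/-! If `J` is generated by `m` elements, then by pigeonhole every monomial of degree `mq + 1` in
the generators is divisible by the `q`-th power of one of them, so `J^(mq+1) ⊆ J^[q]`. Since
`𝔞^r ⊆ J^(sr)`, this forces `s ν_𝔞^J(q) ≤ mq` for every `q`, and the bound passes to the limit. -/

theorem Ideal.span_pow_le_span_image_pow {R : Type*} [CommRing R] (t : Finset R) (q : ℕ) :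
    Ideal.span (t : Set R) ^ (t.card * q + 1) ≤ Ideal.span ((· ^ q) '' (t : Set R)) := by
  classical
  induction t using Finset.induction with
  | empty => simp
  | @insert x t hx ih =>
    have hexp : (insert x t).card * q + 1 = q + (t.card * q + 1) := by
      rw [Finset.card_insert_of_notMem hx]; ring
    rw [Finset.coe_insert, Ideal.span_insert, hexp]
    refine (Ideal.sup_pow_add_le_pow_sup_pow).trans (sup_le ?_ ?_)
    · rw [Ideal.span_singleton_pow, Ideal.span_le, Set.singleton_subset_iff]
      exact Ideal.subset_span ⟨x, Set.mem_insert x _, rfl⟩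
    · exact ih.trans (Ideal.span_mono (Set.image_mono (Set.subset_insert x _)))

theorem Ideal.pow_card_mul_add_one_le_frobPow {R : Type*} [CommRing R] {J : Ideal R}
    {t : Finset R} (ht : Ideal.span (t : Set R) = J) (q : ℕ) :
    J ^ (t.card * q + 1) ≤ J.frobPow q := by
  subst ht
  exact (Ideal.span_pow_le_span_image_pow t q).trans
    (Ideal.span_mono (Set.image_mono fun _ hx => Ideal.subset_span hx))

theorem fnu_mul_le {R : Type*} [CommRing R] {a J : Ideal R} {s n q : ℕ} (hs : 0 < s)
    (haJs : a ≤ J ^ s) (hJ : J ^ (n + 1) ≤ J.frobPow q) :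
    fnu a J q * s ≤ n := by
  suffices h : fnu a J q ≤ n / s from (Nat.le_div_iff_mul_le hs).mp h
  refine csSup_le' fun r hr => (Nat.le_div_iff_mul_le hs).mpr ?_
  by_contra! hlt
  apply hr
  calc a ^ r ≤ (J ^ s) ^ r := Ideal.pow_right_mono haJs r
    _ = J ^ (r * s) := by rw [← pow_mul, mul_comm]
    _ ≤ J ^ (n + 1) := Ideal.pow_le_pow_right hlt
    _ ≤ J.frobPow q := hJ

theorem stmt_8_general {R : Type*} [CommRing R]
    (p : ℕ) (hp : p.Prime)
    (a J : Ideal R)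
    (s : ℕ) (hs : 1 ≤ s) (haJs : a ≤ J ^ s)
    (m : ℕ) (t : Finset R) (ht : Ideal.span (t : Set R) = J) (htcard : t.card = m)
    (c : ℝ)
    (hc : Tendsto (fun e : ℕ => (fnu a J (p ^ e) : ℝ) / (p : ℝ) ^ e) atTop (𝓝 c)) :
    c ≤ (m : ℝ) / s := by
  refine le_of_tendsto hc (Eventually.of_forall fun e => ?_)
  have hbound : fnu a J (p ^ e) * s ≤ m * p ^ e :=
    fnu_mul_le hs haJs (htcard ▸ Ideal.pow_card_mul_add_one_le_frobPow ht (p ^ e))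
  have hq : (0 : ℝ) < (p : ℝ) ^ e := pow_pos (Nat.cast_pos.mpr hp.pos) e
  rw [div_le_div_iff₀ hq (Nat.cast_pos.mpr hs)]
  exact_mod_cast hbound

/-- If `𝔞 ⊆ J^s` and `J` is generated by `m` elements, then `c^J(𝔞) ≤ m/s`. -/
theorem stmt_8 {R : Type*} [CommRing R] [IsLocalRing R]
    (hR : IsRegularLocalRing' R) (p : ℕ) (hp : p.Prime) [CharP R p]
    (a J : Ideal R) (ha0 : a ≠ ⊥) (ham : a ≤ maximalIdeal R)
    (hJ0 : J ≠ ⊥) (hJm : J ≤ maximalIdeal R) (haJ : a ≤ J.radical)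
    (s : ℕ) (hs : 1 ≤ s) (haJs : a ≤ J ^ s)
    (m : ℕ) (t : Finset R) (ht : Ideal.span (t : Set R) = J) (htcard : t.card = m)
    (c : ℝ)
    (hc : Tendsto (fun e : ℕ => (fnu a J (p ^ e) : ℝ) / (p : ℝ) ^ e) atTop (𝓝 c)) :
    c ≤ (m : ℝ) / s :=
  stmt_8_general p hp a J s hs haJs m t ht htcard c hc
end

section
/- Let (R, 𝔪) be a regular local ring of prime characteristic p > 0, and let 𝔞 ⊆ 𝔪 and J ⊆ 𝔪 be nonzero ideals with 𝔞 contained in the radical of J. Let 𝔞̄ denote the integral closure of 𝔞, i.e. the ideal of all x ∈ R satisfying an equation x^m + a₁x^{m−1} + ⋯ + a_m = 0 with a_i ∈ 𝔞^i for each i. Then c^J(𝔞) = c^J(𝔞̄). -/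
/-!
Every element `x` of `𝔞̄`, with an equation of degree `m`, satisfies `x ^ n ∈ 𝔞 ^ (n - m)`
(rewrite `x ^ n` through the equation and induct). Expanding `(I ⊔ K) ^ n` binomially
shows that such linear bounds survive finite sums of ideals, so the Noetherian ideal `𝔞̄` satisfies
`𝔞̄ ^ n ≤ 𝔞 ^ (n - s)` for a single `s`. Hence `ν_𝔞(q) ≤ ν_𝔞̄(q) ≤ ν_𝔞(q) + s`, and the constant
`s` disappears after dividing by `q = p ^ e`.
-/

open Filter Topology IsLocalRing

section IntegralOverIdeal

variable {R : Type*} [CommRing R]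

def IsIntegralOverIdeal (a : Ideal R) (x : R) : Prop :=
  ∃ m : ℕ, 0 < m ∧ ∃ cf : ℕ → R, (∀ i : ℕ, 1 ≤ i → i ≤ m → cf i ∈ a ^ i) ∧
    x ^ m + ∑ i ∈ Finset.Icc 1 m, cf i * x ^ (m - i) = 0

theorem IsIntegralOverIdeal.of_mem {a : Ideal R} {x : R} (hx : x ∈ a) :
    IsIntegralOverIdeal a x := by
  refine ⟨1, one_pos, fun _ => -x, fun i hi₁ hi₂ => ?_, by simp⟩
  obtain rfl : i = 1 := by omega
  simpa using hx

theorem pow_mem_pow_sub_of_integral_eq {a : Ideal R} {x : R} {m : ℕ} {cf : ℕ → R}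
    (hcf : ∀ i : ℕ, 1 ≤ i → i ≤ m → cf i ∈ a ^ i)
    (heq : x ^ m + ∑ i ∈ Finset.Icc 1 m, cf i * x ^ (m - i) = 0) (n : ℕ) :
    x ^ n ∈ a ^ (n - m) := by
  induction n using Nat.strong_induction_on with
  | _ n ih =>
  rcases lt_or_ge n m with hnm | hmn
  · simp [Nat.sub_eq_zero_of_le hnm.le]
  have hxn : x ^ n = -∑ i ∈ Finset.Icc 1 m, cf i * x ^ (n - i) := by
    rw [← Nat.sub_add_cancel hmn, pow_add, eq_neg_of_add_eq_zero_left heq, mul_neg,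
      Finset.mul_sum]
    refine congrArg Neg.neg (Finset.sum_congr rfl fun i hi => ?_)
    rw [mul_left_comm, ← pow_add]
    congr 2
    have := (Finset.mem_Icc.1 hi).2
    omega
  rw [hxn]
  refine neg_mem (Ideal.sum_mem _ fun i hi => ?_)
  obtain ⟨hi₁, him⟩ := Finset.mem_Icc.1 hi
  have hmem := Ideal.mul_mem_mul (hcf i hi₁ him) (ih (n - i) (by omega))
  rw [← pow_add] at hmem
  exact Ideal.pow_le_pow_right (by omega) hmem

theorem IsIntegralOverIdeal.exists_pow_mem_pow_sub {a : Ideal R} {x : R}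
    (hx : IsIntegralOverIdeal a x) : ∃ s : ℕ, ∀ n, x ^ n ∈ a ^ (n - s) :=
  let ⟨m, _, _, hcf, heq⟩ := hx
  ⟨m, pow_mem_pow_sub_of_integral_eq hcf heq⟩

theorem sup_pow_le_pow_sub {I K a : Ideal R} {s t : ℕ} (hI : ∀ n, I ^ n ≤ a ^ (n - s))
    (hK : ∀ n, K ^ n ≤ a ^ (n - t)) (n : ℕ) : (I ⊔ K) ^ n ≤ a ^ (n - (s + t)) := by
  rw [← Ideal.add_eq_sup, add_pow, Ideal.sum_eq_sup]
  refine Finset.sup_le fun i hi => Ideal.mul_le_left.trans ?_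
  have hin : i ≤ n := Finset.mem_range_succ_iff.1 hi
  calc I ^ i * K ^ (n - i) ≤ a ^ (i - s) * a ^ (n - i - t) := Ideal.mul_mono (hI i) (hK _)
    _ = a ^ (i - s + (n - i - t)) := (pow_add _ _ _).symm
    _ ≤ a ^ (n - (s + t)) := Ideal.pow_le_pow_right (by omega)

theorem exists_pow_le_pow_sub_of_isIntegralOverIdeal {a b : Ideal R} (hb : b.FG)
    (h : ∀ x ∈ b, IsIntegralOverIdeal a x) : ∃ s : ℕ, ∀ n, b ^ n ≤ a ^ (n - s) := by
  suffices ∀ I ≤ b, I.FG → ∃ s : ℕ, ∀ n, I ^ n ≤ a ^ (n - s) from this b le_rfl hb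
  intro I hIb hI
  induction I, hI using Submodule.fg_induction with
  | singleton x =>
    obtain ⟨s, hs⟩ := (h x (hIb (Ideal.mem_span_singleton_self x))).exists_pow_mem_pow_sub
    refine ⟨s, fun n => ?_⟩
    rw [Ideal.span_singleton_pow, Ideal.span_singleton_le_iff_mem]
    exact hs n
  | sup I K _ _ ihI ihK =>
    obtain ⟨s, hs⟩ := ihI (le_sup_left.trans hIb)
    obtain ⟨t, ht⟩ := ihK (le_sup_right.trans hIb)
    exact ⟨s + t, sup_pow_le_pow_sub hs ht⟩

end IntegralOverIdeal

section FThreshold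

variable {R : Type*} [CommRing R]

theorem le_radical_frobPow (J : Ideal R) (q : ℕ) : J ≤ (J.frobPow q).radical :=
  fun x hx => ⟨q, Ideal.subset_span ⟨x, hx, rfl⟩⟩

theorem bddAbove_not_pow_le_frobPow {a J : Ideal R} (ha : a.FG) (haJ : a ≤ J.radical) (q : ℕ) :
    BddAbove {r : ℕ | ¬ a ^ r ≤ J.frobPow q} := by
  have hrad : a ≤ (J.frobPow q).radical :=
    haJ.trans ((Ideal.radical_mono (le_radical_frobPow J q)).trans (Ideal.radical_idem _).le)
  obtain ⟨n, hn⟩ := Ideal.exists_pow_le_of_le_radical_of_fg hrad ha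
  exact ⟨n, fun r hr => not_lt.1 fun hnr => hr ((Ideal.pow_le_pow_right hnr.le).trans hn)⟩

variable {a b J : Ideal R} {q : ℕ}

theorem fnu_le_fnu (hab : a ≤ b) (hb : BddAbove {r : ℕ | ¬ b ^ r ≤ J.frobPow q}) :
    fnu a J q ≤ fnu b J q :=
  csSup_le' fun r hr => le_csSup hb fun h => hr ((Ideal.pow_right_mono hab r).trans h)

theorem le_fnu_add_of_pow_le_pow_sub {s : ℕ} (hs : ∀ n, b ^ n ≤ a ^ (n - s))
    (ha : BddAbove {r : ℕ | ¬ a ^ r ≤ J.frobPow q}) {r : ℕ} (hr : ¬ b ^ r ≤ J.frobPow q) :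
    r ≤ fnu a J q + s := by
  have : r - s ≤ fnu a J q := le_csSup ha fun h => hr ((hs r).trans h)
  omega

theorem fnu_le_fnu_add {s : ℕ} (hs : ∀ n, b ^ n ≤ a ^ (n - s))
    (ha : BddAbove {r : ℕ | ¬ a ^ r ≤ J.frobPow q}) : fnu b J q ≤ fnu a J q + s :=
  csSup_le' fun _ => le_fnu_add_of_pow_le_pow_sub hs ha

end FThreshold

theorem eq_of_tendsto_div_of_le_of_le_add {f g : ℕ → ℕ} {d : ℕ → ℝ} {x y : ℝ}
    (hd : Tendsto d atTop atTop) (s : ℕ) (hfg : ∀ e, f e ≤ g e) (hgf : ∀ e, g e ≤ f e + s)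
    (hx : Tendsto (fun e => (f e : ℝ) / d e) atTop (𝓝 x))
    (hy : Tendsto (fun e => (g e : ℝ) / d e) atTop (𝓝 y)) : x = y := by
  have hpos : ∀ᶠ e in atTop, 0 < d e := hd.eventually_gt_atTop 0
  have hxs : Tendsto (fun e => (f e : ℝ) / d e + s / d e) atTop (𝓝 (x + 0)) :=
    hx.add (tendsto_const_nhds.div_atTop hd)
  refine le_antisymm (le_of_tendsto_of_tendsto hx hy (hpos.mono fun e he => ?_))
    (le_of_tendsto_of_tendsto hy (add_zero x ▸ hxs) (hpos.mono fun e he => ?_))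
  · dsimp only
    gcongr
    exact_mod_cast hfg e
  · dsimp only
    rw [← add_div]
    gcongr
    exact_mod_cast hgf e

theorem stmt_10_general {R : Type*} [CommRing R] [IsLocalRing R]
    (hR : IsRegularLocalRing' R) (p : ℕ) (hp : p.Prime)
    (a J : Ideal R) (haJ : a ≤ J.radical)
    (abar : Ideal R)
    (habar : ∀ x : R, x ∈ abar ↔
      ∃ m : ℕ, 0 < m ∧ ∃ cf : ℕ → R, (∀ i : ℕ, 1 ≤ i → i ≤ m → cf i ∈ a ^ i) ∧
        x ^ m + ∑ i ∈ Finset.Icc 1 m, cf i * x ^ (m - i) = 0)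
    (c cbar : ℝ)
    (hc : Tendsto (fun e : ℕ => (fnu a J (p ^ e) : ℝ) / (p : ℝ) ^ e) atTop (𝓝 c))
    (hcbar : Tendsto (fun e : ℕ => (fnu abar J (p ^ e) : ℝ) / (p : ℝ) ^ e) atTop (𝓝 cbar)) :
    c = cbar := by
  have := hR.1
  have ha_le : a ≤ abar := fun x hx => (habar x).2 (IsIntegralOverIdeal.of_mem hx)
  obtain ⟨s, hs⟩ := exists_pow_le_pow_sub_of_isIntegralOverIdeal (IsNoetherian.noetherian abar)
    fun x hx => (habar x).1 hx
  have ha_bdd := bddAbove_not_pow_le_frobPow (IsNoetherian.noetherian a) haJ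
  have habar_bdd (q : ℕ) : BddAbove {r : ℕ | ¬ abar ^ r ≤ J.frobPow q} :=
    ⟨_, fun _ => le_fnu_add_of_pow_le_pow_sub hs (ha_bdd q)⟩
  exact eq_of_tendsto_div_of_le_of_le_add
    (tendsto_pow_atTop_atTop_of_one_lt (by exact_mod_cast hp.one_lt)) s
    (fun _ => fnu_le_fnu ha_le (habar_bdd _)) (fun _ => fnu_le_fnu_add hs (ha_bdd _)) hc hcbar

/-- The F-threshold of an ideal equals the F-threshold of its integral closure:
`c^J(𝔞) = c^J(𝔞̄)`. -/
theorem stmt_10 {R : Type*} [CommRing R] [IsLocalRing R]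
    (hR : IsRegularLocalRing' R) (p : ℕ) (hp : p.Prime) [CharP R p]
    (a J : Ideal R) (ha0 : a ≠ ⊥) (ham : a ≤ maximalIdeal R)
    (hJ0 : J ≠ ⊥) (hJm : J ≤ maximalIdeal R) (haJ : a ≤ J.radical)
    (abar : Ideal R)
    (habar : ∀ x : R, x ∈ abar ↔
      ∃ m : ℕ, 0 < m ∧ ∃ cf : ℕ → R, (∀ i : ℕ, 1 ≤ i → i ≤ m → cf i ∈ a ^ i) ∧
        x ^ m + ∑ i ∈ Finset.Icc 1 m, cf i * x ^ (m - i) = 0)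
    (c cbar : ℝ)
    (hc : Tendsto (fun e : ℕ => (fnu a J (p ^ e) : ℝ) / (p : ℝ) ^ e) atTop (𝓝 c))
    (hcbar : Tendsto (fun e : ℕ => (fnu abar J (p ^ e) : ℝ) / (p : ℝ) ^ e) atTop (𝓝 cbar)) :
    c = cbar :=
  stmt_10_general hR p hp a J haJ abar habar c cbar hc hcbar
end

section
/- Let (R, 𝔪) be a regular local ring of prime characteristic p > 0, and let 𝔞 ⊆ 𝔪 and J ⊆ 𝔪 be nonzero ideals with 𝔞 contained in the radical of J. Then for every power q = p^e of p one has c^{J^{[q]}}(𝔞) = q · c^{J}(𝔞). -/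
open Filter Topology IsLocalRing

/-! Since `x ↦ x ^ p ^ k` is a ring endomorphism, `I^{[p^k]}` is the extension of `I` along it;
extension commutes with taking generators, so `(J^{[q]})^{[p^k]} = J^{[q p^k]}`. Hence
`ν_𝔞^{J^{[q]}}(p^k) = ν_𝔞^J(q p^k)`, and the sequence defining `c^{J^{[q]}}(𝔞)` is `q` times a
tail of the one defining `c^J(𝔞)`. -/

section FrobeniusPower

variable {R : Type*} [CommRing R] (p : ℕ) [ExpChar R p]

theorem Ideal.frobPow_expChar_pow_eq_map (I : Ideal R) (k : ℕ) :
    I.frobPow (p ^ k) = I.map (iterateFrobenius R p k) :=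
  rfl

theorem Ideal.frobPow_frobPow_expChar_pow (I : Ideal R) (m k : ℕ) :
    (I.frobPow m).frobPow (p ^ k) = I.frobPow (m * p ^ k) := by
  rw [frobPow_expChar_pow_eq_map, frobPow, map_span, Set.image_image]
  simp only [iterateFrobenius_def, ← pow_mul]
  rfl

theorem fnu_frobPow_expChar_pow (a J : Ideal R) (e k : ℕ) :
    fnu a (J.frobPow (p ^ e)) (p ^ k) = fnu a J (p ^ (k + e)) := by
  rw [fnu, fnu, Ideal.frobPow_frobPow_expChar_pow, ← pow_add, add_comm]

end FrobeniusPower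

theorem stmt_15_general {R : Type*} [CommRing R]
    (p : ℕ) (hp : p.Prime) [CharP R p]
    (a J : Ideal R)
    (e : ℕ) (c cq : ℝ)
    (hc : Tendsto (fun e' : ℕ => (fnu a J (p ^ e') : ℝ) / (p : ℝ) ^ e') atTop (𝓝 c))
    (hcq : Tendsto (fun e' : ℕ => (fnu a (J.frobPow (p ^ e)) (p ^ e') : ℝ) / (p : ℝ) ^ e')
      atTop (𝓝 cq)) :
    cq = (p : ℝ) ^ e * c := by
  have := Fact.mk hp
  have hp0 : (p : ℝ) ≠ 0 := by exact_mod_cast hp.ne_zero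
  have htail := (hc.comp (tendsto_add_atTop_nat e)).const_mul ((p : ℝ) ^ e)
  refine tendsto_nhds_unique (hcq.congr fun k => ?_) htail
  rw [Function.comp_apply, fnu_frobPow_expChar_pow, pow_add (p : ℝ)]
  field_simp

/-- `c^{J^{[q]}}(𝔞) = q · c^J(𝔞)` for every `q = p^e`. -/
theorem stmt_15 {R : Type*} [CommRing R] [IsLocalRing R]
    (hR : IsRegularLocalRing' R) (p : ℕ) (hp : p.Prime) [CharP R p]
    (a J : Ideal R) (ha0 : a ≠ ⊥) (ham : a ≤ maximalIdeal R)
    (hJ0 : J ≠ ⊥) (hJm : J ≤ maximalIdeal R) (haJ : a ≤ J.radical)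
    (e : ℕ) (he : 1 ≤ e) (c cq : ℝ)
    (hc : Tendsto (fun e' : ℕ => (fnu a J (p ^ e') : ℝ) / (p : ℝ) ^ e') atTop (𝓝 c))
    (hcq : Tendsto (fun e' : ℕ => (fnu a (J.frobPow (p ^ e)) (p ^ e') : ℝ) / (p : ℝ) ^ e')
      atTop (𝓝 cq)) :
    cq = (p : ℝ) ^ e * c :=
  stmt_15_general p hp a J e c cq hc hcq
end

section
/- Let n ≥ 3 be an integer, p a prime, and f = X₁X₂ + X₃² + ⋯ + X_n² in the polynomial ring 𝔽_p[X₁, …, X_n]. Then for every e ≥ 1, f^{p^e − 1} does not belong to the ideal (X₁^{p^e}, …, X_n^{p^e}) (while f^{p^e} does); consequently ν_f(p^e) = p^e − 1 for all e and the F-pure threshold of f at the origin equals 1. -/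
open Filter Topology IsLocalRing

/-- A Noetherian local ring is *regular* if its maximal ideal can be generated by
`dim R` elements. -/
def IsRegularLocalRingOld (R : Type*) [CommRing R] [IsLocalRing R] : Prop :=
  IsNoetherianRing R ∧
    ∃ s : Finset R, Ideal.span (s : Set R) = IsLocalRing.maximalIdeal R ∧
      (s.card : WithBot (WithTop ℕ)) = ringKrullDim R

/-- The quadric `f = X₁X₂ + X₃² + ⋯ + X_n²` over `𝔽_p`. -/
noncomputable def quadricF (n p : ℕ) (hn : 3 ≤ n) : MvPolynomial (Fin n) (ZMod p) :=
  MvPolynomial.X ⟨0, by omega⟩ * MvPolynomial.X ⟨1, by omega⟩ +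
    ∑ i ∈ Finset.univ.filter (fun i : Fin n => 2 ≤ (i : ℕ)), MvPolynomial.X i ^ 2

/-- The ideal `(X₁^{p^e}, …, X_n^{p^e})` in `𝔽_p[X₁, …, X_n]`. -/
noncomputable def frobXIdeal (n p e : ℕ) : Ideal (MvPolynomial (Fin n) (ZMod p)) :=
  Ideal.span (Set.range fun i : Fin n => MvPolynomial.X i ^ p ^ e)

/-!
Raising to the power `q = p^e` is additive in characteristic `p`, so `f^q` lies in the ideal
generated by the `q`-th powers of the variables; hence `ν_f(q) ≤ q - 1`. For the lower bound,
substitute `0` for `X₃, …, X_n`: this maps `(X₁^q, …, X_n^q)` into itself and `f` to `X₁X₂`,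
and the monomial `(X₁X₂)^{q-1}` is not in the monomial ideal `(X₁^q, …, X_n^q)` since all its
exponents are below `q`. Thus `ν_f(q) = q - 1` and `ν_f(p^e)/p^e = 1 - p^{-e} → 1`.
-/

open MvPolynomial

theorem Ideal.pow_expChar_pow_mem_span_image {R : Type*} [CommSemiring R] (p : ℕ) [ExpChar R p]
    {s : Set R} {x : R} (hx : x ∈ Ideal.span s) (e : ℕ) :
    x ^ p ^ e ∈ Ideal.span ((· ^ p ^ e) '' s) := by
  induction hx using Submodule.span_induction with
  | mem y hy => exact Ideal.subset_span ⟨y, hy, rfl⟩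
  | zero => rw [zero_pow (expChar_pow_pos R p e).ne']; exact zero_mem _
  | add y z _ _ hy hz => rw [add_pow_expChar_pow]; exact add_mem hy hz
  | smul a y _ hy => rw [smul_eq_mul, mul_pow]; exact Ideal.mul_mem_left _ _ hy

theorem Ideal.sSup_setOf_pow_notMem_eq {R : Type*} [CommSemiring R] {I : Ideal R} {f : R}
    {m : ℕ} (hm : f ^ m ∉ I) (hm_succ : f ^ (m + 1) ∈ I) :
    sSup {r : ℕ | f ^ r ∉ I} = m := by
  have hset : {r : ℕ | f ^ r ∉ I} = Set.Iic m := by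
    ext r
    simp only [Set.mem_ofPred_eq, Set.mem_Iic]
    constructor
    · intro hr
      by_contra! hlt
      exact hr (I.pow_mem_of_pow_mem hm_succ hlt)
    · exact fun hr hr_mem => hm (I.pow_mem_of_pow_mem hr_mem hr)
  rw [hset, csSup_Iic]

namespace MvPolynomial

variable {σ R : Type*} [CommSemiring R]

theorem monomial_one_notMem_span_X_pow [Nontrivial R] {q : ℕ} {d : σ →₀ ℕ}
    (hd : ∀ i, d i < q) :
    monomial d (1 : R) ∉ Ideal.span (Set.range fun i : σ => (X i : MvPolynomial σ R) ^ q) := by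
  have hgen : (Set.range fun i : σ => (X i : MvPolynomial σ R) ^ q) =
      (fun s => monomial s (1 : R)) '' Set.range fun i => Finsupp.single i q := by
    rw [← Set.range_comp]
    simp only [Function.comp_def, X_pow_eq_monomial]
  rw [hgen, mem_ideal_span_monomial_image]
  intro h
  obtain ⟨_, ⟨i, rfl⟩, hle⟩ := h d (by classical simp [coeff_monomial])
  exact (hd i).not_ge (by simpa using hle i)

theorem X_mul_X_pow_notMem_span_X_pow [Nontrivial R] {i j : σ} (hij : i ≠ j) {q : ℕ}
    (hq : 0 < q) :
    (X i * X j : MvPolynomial σ R) ^ (q - 1) ∉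
      Ideal.span (Set.range fun k : σ => (X k : MvPolynomial σ R) ^ q) := by
  rw [mul_pow, X_pow_eq_monomial, X_pow_eq_monomial, monomial_mul, mul_one]
  classical
  refine monomial_one_notMem_span_X_pow fun k => ?_
  rw [Finsupp.add_apply, Finsupp.single_apply, Finsupp.single_apply]
  split_ifs with hi hj
  · exact absurd (hi.trans hj.symm) hij
  all_goals omega

theorem aeval_ite_X_mem_span_X_pow (P : σ → Prop) [DecidablePred P] {q : ℕ} (hq : q ≠ 0)
    {g : MvPolynomial σ R}
    (hg : g ∈ Ideal.span (Set.range fun i : σ => (X i : MvPolynomial σ R) ^ q)) :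
    aeval (fun i => if P i then X i else 0) g ∈
      Ideal.span (Set.range fun i : σ => (X i : MvPolynomial σ R) ^ q) := by
  set J := Ideal.span (Set.range fun i : σ => (X i : MvPolynomial σ R) ^ q)
  suffices hJ : J ≤ J.comap (aeval fun i => if P i then X i else 0) from hJ hg
  refine Ideal.span_le.2 ?_
  rintro _ ⟨i, rfl⟩
  simp only [SetLike.mem_coe, Ideal.mem_comap, map_pow, aeval_X]
  split_ifs
  · exact Ideal.subset_span ⟨i, rfl⟩
  · rw [zero_pow hq]; exact zero_mem _

end MvPolynomial

section Quadric

variable {n p : ℕ}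

theorem quadricF_mem_span_X (hn : 3 ≤ n) :
    quadricF n p hn ∈ Ideal.span (Set.range (X : Fin n → MvPolynomial (Fin n) (ZMod p))) := by
  unfold quadricF
  refine add_mem (Ideal.mul_mem_right _ _ (Ideal.subset_span (Set.mem_range_self _)))
    (Ideal.sum_mem _ fun i _ => Ideal.pow_mem_of_mem _ (Ideal.subset_span (Set.mem_range_self i)) 2 two_pos)

theorem quadricF_pow_mem_frobXIdeal (hn : 3 ≤ n) (hp : p.Prime) (e : ℕ) :
    quadricF n p hn ^ p ^ e ∈ frobXIdeal n p e := by
  have : Fact p.Prime := ⟨hp⟩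
  have h := Ideal.pow_expChar_pow_mem_span_image p (quadricF_mem_span_X (p := p) hn) e
  rwa [← Set.range_comp] at h

theorem aeval_ite_X_quadricF (hn : 3 ≤ n) :
    aeval (fun i : Fin n => if (i : ℕ) ≤ 1 then (X i : MvPolynomial (Fin n) (ZMod p)) else 0)
      (quadricF n p hn) = X ⟨0, by omega⟩ * X ⟨1, by omega⟩ := by
  have hsum : ∀ i ∈ Finset.univ.filter (fun i : Fin n => 2 ≤ (i : ℕ)),
      aeval (fun i : Fin n => if (i : ℕ) ≤ 1 then (X i : MvPolynomial (Fin n) (ZMod p)) else 0)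
        (X i ^ 2 : MvPolynomial (Fin n) (ZMod p)) = 0 := by
    intro i hi
    rw [Finset.mem_filter] at hi
    rw [map_pow, aeval_X, if_neg (by omega), zero_pow two_ne_zero]
  rw [quadricF, map_add, map_sum, Finset.sum_eq_zero hsum, add_zero, map_mul, aeval_X, aeval_X,
    if_pos zero_le_one, if_pos le_rfl]

theorem quadricF_pow_sub_one_notMem_frobXIdeal (hn : 3 ≤ n) (hp : p.Prime) (e : ℕ) :
    quadricF n p hn ^ (p ^ e - 1) ∉ frobXIdeal n p e := by
  have : Fact p.Prime := ⟨hp⟩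
  intro h
  have h' := aeval_ite_X_mem_span_X_pow (fun i : Fin n => (i : ℕ) ≤ 1)
    (pow_ne_zero e hp.ne_zero) h
  rw [map_pow, aeval_ite_X_quadricF hn] at h'
  exact X_mul_X_pow_notMem_span_X_pow (by simp [Fin.ext_iff]) (pow_pos hp.pos e) h'

end Quadric

theorem tendsto_pow_sub_one_div_pow {b : ℕ} (hb : 1 < b) :
    Tendsto (fun e : ℕ => ((b ^ e - 1 : ℕ) : ℝ) / (b : ℝ) ^ e) atTop (𝓝 1) := by
  have hb' : (1 : ℝ) < b := by exact_mod_cast hb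
  have hrewrite : ∀ e : ℕ, ((b ^ e - 1 : ℕ) : ℝ) / (b : ℝ) ^ e = 1 - ((b : ℝ) ^ e)⁻¹ := by
    intro e
    have hpos : (0 : ℝ) < (b : ℝ) ^ e := by positivity
    rw [Nat.cast_sub (Nat.one_le_pow _ _ (by omega)), Nat.cast_pow, Nat.cast_one]
    field_simp
  simp only [hrewrite]
  simpa using tendsto_const_nhds.sub
    (tendsto_inv_atTop_zero.comp (tendsto_pow_atTop_atTop_of_one_lt hb'))

/-- For `f = X₁X₂ + X₃² + ⋯ + X_n²` (`n ≥ 3`): `f^{p^e−1} ∉ (X₁^{p^e}, …, X_n^{p^e})`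
while `f^{p^e} ∈ (X₁^{p^e}, …, X_n^{p^e})`, so `ν_f(p^e) = p^e − 1` for all `e ≥ 1`
and the F-pure threshold of `f` at the origin is `1`. -/
theorem stmt_19 (n : ℕ) (hn : 3 ≤ n) (p : ℕ) (hp : p.Prime) :
    (∀ e : ℕ, 1 ≤ e →
      quadricF n p hn ^ (p ^ e - 1) ∉ frobXIdeal n p e ∧
      quadricF n p hn ^ p ^ e ∈ frobXIdeal n p e ∧
      sSup {r : ℕ | quadricF n p hn ^ r ∉ frobXIdeal n p e} = p ^ e - 1) ∧
    Tendsto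
      (fun e : ℕ =>
        ((sSup {r : ℕ | quadricF n p hn ^ r ∉ frobXIdeal n p e} : ℕ) : ℝ) / (p : ℝ) ^ e)
      atTop (𝓝 1) := by
  have hν : ∀ e, sSup {r : ℕ | quadricF n p hn ^ r ∉ frobXIdeal n p e} = p ^ e - 1 := fun e =>
    Ideal.sSup_setOf_pow_notMem_eq (quadricF_pow_sub_one_notMem_frobXIdeal hn hp e)
      (by rw [Nat.sub_add_cancel (pow_pos hp.pos e)]; exact quadricF_pow_mem_frobXIdeal hn hp e)
  refine ⟨fun e _ => ⟨quadricF_pow_sub_one_notMem_frobXIdeal hn hp e,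
    quadricF_pow_mem_frobXIdeal hn hp e, hν e⟩, ?_⟩
  simp only [hν]
  exact tendsto_pow_sub_one_div_pow hp.one_lt
end
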